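/- Let F have characteristic 2, t = 2^τ, and n ≡ 2k + t mod 2^{τ+1} with t ≤ k and k + t ≤ n. Then FΩ_k = ker φ_t^k ⊕ im φ_t^{k⋆} and ker φ_t^k = im φ_t^{k+t}, where φ_t^k : FΩ_k → FΩ_{k−t} sends each k-subset to the sum of its (k−t)-subsets, φ_t^{k+t} : FΩ_{k+t} → FΩ_k likewise, and φ_t^{k⋆} : FΩ_{k−t} → FΩ_k sends each (k−t)-subset to the sum of k-subsets containing it. -/

import Mathlib

/-- The free `F`-vector space on the `k`-element subsets of `{1,…,n}` (here `k : ℤ`,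
so that the space is zero for `k < 0`). -/
def FOmega (F : Type*) [Field F] (n : ℕ) (k : ℤ) : Type _ :=
  {s : Finset (Fin n) // (s.card : ℤ) = k} →₀ F

noncomputable instance (F : Type*) [Field F] (n : ℕ) (k : ℤ) :
    AddCommGroup (FOmega F n k) := Finsupp.instAddCommGroup

noncomputable instance (F : Type*) [Field F] (n : ℕ) (k : ℤ) :
    Module F (FOmega F n k) := Finsupp.module _ _

/-- The multistep boundary map `FΩ_a → FΩ_b`, sending a subset `Y` of size `a`
to the sum of all its subsets of size `b` (this is `φ_t^a` with `t = a - b`). -/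
noncomputable def phi (F : Type*) [Field F] (n : ℕ) (a b : ℤ) :
    FOmega F n a →ₗ[F] FOmega F n b :=
  Finsupp.lift _ F _ fun Y =>
    ∑ X ∈ (Y.1.powerset.filter fun X => (X.card : ℤ) = b).attach,
      Finsupp.single ⟨X.1, (Finset.mem_filter.mp X.2).2⟩ (1 : F)

/-- The dual multistep map `FΩ_a → FΩ_b` (for `b ≥ a`), sending a subset `Y` of size
`a` to the sum of all subsets of size `b` containing it. -/
noncomputable def phiStar (F : Type*) [Field F] (n : ℕ) (a b : ℤ) :
    FOmega F n a →ₗ[F] FOmega F n b :=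
  Finsupp.lift _ F _ fun Y =>
    ∑ Z ∈ Finset.univ.filter
        (fun Z : {s : Finset (Fin n) // (s.card : ℤ) = b} => Y.1 ⊆ Z.1),
      Finsupp.single Z (1 : F)

/-!
Write `D = φ_t^k`, `U = φ_t^{k⋆}`, `D' = φ_t^{k+t}` and `U'` for the adjoint of `D'`. The
coefficient of `Z` in `(U D + D' U') Y` counts the `(k-t)`-subsets of `Y ∩ Z` plus the
`(k+t)`-supersets of `Y ∪ Z`. With `c = |Y ∩ Z|` and `r = c + t - k` these numbers are `C(c, r)`
and `C(n - |Y ∪ Z|, r)` (both zero if `r < 0`), and `n - |Y ∪ Z| ≡ c + t (mod 2t)`. By Lucas'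
theorem the sum is then odd exactly when `r = t`, that is when `Y = Z`. So `U D + D' U' = id`, on
`FΩ_k` and likewise on `FΩ_{k-t}`, while `D D' = 0` and `U U = 0` because `C(2t, t)` is even.
These identities give both claims by linear algebra.
-/

open scoped Finset

theorem choose_modEq_choose_of_modEq {p : ℕ} [Fact p.Prime] :
    ∀ {a m m' r : ℕ}, m ≡ m' [MOD p ^ a] → r < p ^ a → m.choose r ≡ m'.choose r [MOD p]
  | 0, _, _, r, _, hr => by
    obtain rfl : r = 0 := by simpa using hr
    simp [Nat.ModEq]
  | a + 1, m, m', r, hm, hr => by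
    have hmod : m % p = m' % p := Nat.ModEq.of_dvd (dvd_pow_self p a.succ_ne_zero) hm
    have hdiv : m / p ≡ m' / p [MOD p ^ a] := by
      unfold Nat.ModEq
      rw [← Nat.mod_mul_right_div_self, ← Nat.mod_mul_right_div_self, ← pow_succ', hm]
    have hr' : r / p < p ^ a := Nat.div_lt_of_lt_mul (by rwa [← pow_succ'])
    calc m.choose r ≡ (m % p).choose (r % p) * (m / p).choose (r / p) [MOD p] :=
          Choose.choose_modEq_choose_mod_mul_choose_div_nat
      _ ≡ (m' % p).choose (r % p) * (m' / p).choose (r / p) [MOD p] := by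
          rw [hmod]; exact (choose_modEq_choose_of_modEq hdiv hr').mul_left _
      _ ≡ m'.choose r [MOD p] := Choose.choose_modEq_choose_mod_mul_choose_div_nat.symm

theorem choose_prime_pow_modEq {p : ℕ} [Fact p.Prime] : ∀ (a m : ℕ),
    m.choose (p ^ a) ≡ m / p ^ a [MOD p]
  | 0, m => by simp [Nat.ModEq]
  | a + 1, m => by
    have hp : 0 < p := (Fact.out : p.Prime).pos
    calc m.choose (p ^ (a + 1))
        ≡ (m % p).choose (p ^ (a + 1) % p) * (m / p).choose (p ^ (a + 1) / p) [MOD p] :=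
          Choose.choose_modEq_choose_mod_mul_choose_div_nat
      _ = (m / p).choose (p ^ a) := by
          rw [pow_succ, Nat.mul_mod_left, Nat.mul_div_cancel _ hp, Nat.choose_zero_right, one_mul]
      _ ≡ m / p / p ^ a [MOD p] := choose_prime_pow_modEq a (m / p)
      _ = m / p ^ (a + 1) := by rw [Nat.div_div_eq_div_mul, pow_succ']

theorem choose_add_choose_modEq_two {τ m m' r : ℕ} (hm : m' ≡ m + 2 ^ τ [MOD 2 ^ (τ + 1)])
    (hr : r ≤ 2 ^ τ) : m.choose r + m'.choose r ≡ if r = 2 ^ τ then 1 else 0 [MOD 2] := by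
  obtain hr | rfl := hr.lt_or_eq
  · have hmm' : m ≡ m' [MOD 2 ^ τ] := by
      have := (Nat.ModEq.of_dvd (pow_dvd_pow 2 τ.le_succ) hm).symm
      simpa [Nat.ModEq] using this
    have := choose_modEq_choose_of_modEq hmm' hr
    rw [if_neg hr.ne]
    unfold Nat.ModEq at this ⊢
    omega
  · have hbit : m' / 2 ^ τ % 2 = (m / 2 ^ τ + 1) % 2 := by
      rw [← Nat.mod_mul_right_div_self, ← pow_succ, hm, pow_succ, Nat.mod_mul_right_div_self,
        Nat.add_div_right _ (by positivity)]
    rw [if_pos rfl]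
    refine ((choose_prime_pow_modEq τ m).add (choose_prime_pow_modEq τ m')).trans ?_
    unfold Nat.ModEq
    omega

section ChainHomotopy

variable {R V₀ V₁ V₂ V₃ : Type*} [Ring R] [AddCommGroup V₀] [AddCommGroup V₁] [AddCommGroup V₂]
  [AddCommGroup V₃] [Module R V₀] [Module R V₁] [Module R V₂] [Module R V₃]

theorem LinearMap.ker_eq_range_of_comp_add_comp_eq_id {D : V₂ →ₗ[R] V₁} {U : V₁ →ₗ[R] V₂}
    {D' : V₃ →ₗ[R] V₂} {U' : V₂ →ₗ[R] V₃} (hid : U ∘ₗ D + D' ∘ₗ U' = LinearMap.id)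
    (hDD : D ∘ₗ D' = 0) : ker D = range D' := by
  refine le_antisymm (fun x hx => ⟨U' x, ?_⟩) (range_le_ker_iff.mpr hDD)
  simpa [LinearMap.mem_ker.mp hx] using LinearMap.congr_fun hid x

theorem LinearMap.codisjoint_ker_range_of_comp_add_comp_eq_id {D : V₂ →ₗ[R] V₁}
    {U : V₁ →ₗ[R] V₂} {D' : V₃ →ₗ[R] V₂} {U' : V₂ →ₗ[R] V₃}
    (hid : U ∘ₗ D + D' ∘ₗ U' = LinearMap.id) (hDD : D ∘ₗ D' = 0) :
    Codisjoint (ker D) (range U) := by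
  refine Submodule.codisjoint_iff_exists_add_eq.mpr fun x =>
    ⟨D' (U' x), U (D x), ?_, ⟨D x, rfl⟩, ?_⟩
  · exact range_le_ker_iff.mpr hDD ⟨U' x, rfl⟩
  · simpa [add_comm] using LinearMap.congr_fun hid x

theorem LinearMap.disjoint_ker_range_of_comp_add_comp_eq_id {D : V₂ →ₗ[R] V₁}
    {U : V₁ →ₗ[R] V₂} {D₀ : V₁ →ₗ[R] V₀} {U₀ : V₀ →ₗ[R] V₁}
    (hid : U₀ ∘ₗ D₀ + D ∘ₗ U = LinearMap.id) (hUU : U ∘ₗ U₀ = 0) :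
    Disjoint (ker D) (range U) := by
  refine Submodule.disjoint_def.mpr fun x hx ⟨y, hy⟩ => ?_
  have hy' : U₀ (D₀ y) = y := by
    simpa [LinearMap.mem_ker.mp (hy ▸ hx)] using LinearMap.congr_fun hid y
  rw [← hy, ← hy']
  exact LinearMap.congr_fun hUU (D₀ y)

end ChainHomotopy

abbrev Omega (α : Type*) (b : ℤ) := {s : Finset α // (s.card : ℤ) = b}

namespace Omega

theorem isEmpty_of_neg {α : Type*} {b : ℤ} (hb : b < 0) : IsEmpty (Omega α b) :=
  ⟨fun X => by have := X.2; omega⟩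

theorem eq_iff_card_inter {α : Type*} [DecidableEq α] {a : ℤ} {Y Z : Omega α a} :
    Y = Z ↔ (#(Y.1 ∩ Z.1) : ℤ) = a := by
  refine ⟨fun h => by simp [h, Z.2], fun h => Subtype.ext ?_⟩
  have hYZ : Y.1 ⊆ Z.1 := Finset.inter_eq_left.mp
    (Finset.eq_of_subset_of_card_le Finset.inter_subset_left (by have := Y.2; omega))
  exact Finset.eq_of_subset_of_card_le hYZ (by have := Y.2; have := Z.2; omega)

theorem card_union {α : Type*} [DecidableEq α] {a : ℤ} (Y Z : Omega α a) :
    (#(Y.1 ∪ Z.1) : ℤ) = 2 * a - #(Y.1 ∩ Z.1) := by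
  have := Finset.card_union_add_card_inter Y.1 Z.1
  have := Y.2; have := Z.2; omega

variable {α : Type*} [Fintype α] [DecidableEq α]

theorem card_subset (S : Finset α) (r : ℕ) : #{X : Omega α r | X.1 ⊆ S} = S.card.choose r := by
  rw [← Finset.card_powersetCard]
  refine Finset.card_nbij (·.1) (fun X hX => ?_) (fun X _ Y _ h => Subtype.ext h) fun V hV => ?_
  · exact Finset.mem_powersetCard.mpr ⟨(Finset.mem_filter.mp hX).2, by exact_mod_cast X.2⟩
  · obtain ⟨hVS, hV⟩ := Finset.mem_powersetCard.mp hV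
    exact ⟨⟨V, by rw [hV]⟩, by simpa using hVS, rfl⟩

theorem card_subset_symm (S : Finset α) (b : ℤ) :
    #{X : Omega α b | X.1 ⊆ S} = #{X : Omega α (S.card - b) | X.1 ⊆ S} := by
  have hcard {c : ℤ} (X : Omega α c) (hX : X.1 ⊆ S) : ((S \ X.1).card : ℤ) = S.card - c := by
    rw [Finset.card_sdiff_of_subset hX, Nat.cast_sub (Finset.card_le_card hX), X.2]
  refine Finset.card_bij' (fun X hX => ⟨S \ X.1, hcard X (Finset.mem_filter.mp hX).2⟩)
    (fun X hX => ⟨S \ X.1, by rw [hcard X (Finset.mem_filter.mp hX).2]; ring⟩)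
    (fun _ _ => by simp) (fun _ _ => by simp) (fun X hX => ?_) (fun X hX => ?_)
  · exact Subtype.ext (Finset.sdiff_sdiff_eq_self (Finset.mem_filter.mp hX).2)
  · exact Subtype.ext (Finset.sdiff_sdiff_eq_self (Finset.mem_filter.mp hX).2)

theorem card_between {A B : Finset α} (hAB : A ⊆ B) (b : ℤ) :
    #{W : Omega α b | A ⊆ W.1 ∧ W.1 ⊆ B} = #{V : Omega α (b - A.card) | V.1 ⊆ B \ A} := by
  refine Finset.card_bij'
    (fun W hW => ⟨W.1 \ A, by
      rw [Finset.card_sdiff_of_subset (Finset.mem_filter.mp hW).2.1,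
        Nat.cast_sub (Finset.card_le_card (Finset.mem_filter.mp hW).2.1), W.2]⟩)
    (fun V hV => ⟨V.1 ∪ A, by
      rw [Finset.card_union_of_disjoint ((Finset.subset_sdiff.mp (Finset.mem_filter.mp hV).2).2),
        Nat.cast_add, V.2]; ring⟩)
    (fun W hW => ?_) (fun V hV => ?_) (fun W hW => ?_) (fun V hV => ?_)
  · obtain ⟨-, hWB⟩ := (Finset.mem_filter.mp hW).2
    simpa using Finset.sdiff_subset_sdiff hWB le_rfl
  · have hV := Finset.subset_sdiff.mp (Finset.mem_filter.mp hV).2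
    exact Finset.mem_filter.mpr ⟨Finset.mem_univ _, Finset.subset_union_right,
      Finset.union_subset hV.1 hAB⟩
  · exact Subtype.ext (Finset.sdiff_union_of_subset (Finset.mem_filter.mp hW).2.1)
  · exact Subtype.ext (Finset.union_sdiff_cancel_right
      (Finset.subset_sdiff.mp (Finset.mem_filter.mp hV).2).2)

theorem card_subset_and_subset {a : ℤ} (Y Z : Omega α a) (s : ℤ) :
    #{X : Omega α (a - s) | X.1 ⊆ Y.1 ∧ X.1 ⊆ Z.1} =
      #{X : Omega α (#(Y.1 ∩ Z.1) + s - a) | X.1 ⊆ Y.1 ∩ Z.1} := by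
  simp_rw [← Finset.subset_inter_iff]
  rw [card_subset_symm, show (#(Y.1 ∩ Z.1) : ℤ) - (a - s) = #(Y.1 ∩ Z.1) + s - a by ring]

theorem card_superset_and_superset {a : ℤ} (Y Z : Omega α a) (s : ℤ) :
    #{W : Omega α (a + s) | Y.1 ⊆ W.1 ∧ Z.1 ⊆ W.1} =
      #{V : Omega α (#(Y.1 ∩ Z.1) + s - a) | V.1 ⊆ (Y.1 ∪ Z.1)ᶜ} := by
  have hfilter : #{W : Omega α (a + s) | Y.1 ⊆ W.1 ∧ Z.1 ⊆ W.1} =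
      #{W : Omega α (a + s) | Y.1 ∪ Z.1 ⊆ W.1 ∧ W.1 ⊆ Finset.univ} := by
    simp only [Finset.union_subset_iff, Finset.subset_univ, and_true]
  rw [hfilter, card_between (Finset.subset_univ _), card_union, ← Finset.compl_eq_univ_sdiff,
    show a + s - (2 * a - #(Y.1 ∩ Z.1)) = #(Y.1 ∩ Z.1) + s - a by ring]

theorem natCast_card_between_eq_zero (F : Type*) [AddMonoidWithOne F] [CharP F 2]
    {A B : Finset α} {b : ℤ} {s : ℕ} (hs : 0 < s) (hA : b = A.card + s)
    (hB : (B.card : ℤ) = b + s) :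
    (#{W : Omega α b | A ⊆ W.1 ∧ W.1 ⊆ B} : F) = 0 := by
  by_cases hAB : A ⊆ B
  · have hsdiff : (B \ A).card = 2 * s := by
      rw [Finset.card_sdiff_of_subset hAB]; omega
    rw [card_between hAB, show b - A.card = (s : ℤ) by omega, card_subset, hsdiff,
      ← Nat.centralBinom_eq_two_mul_choose]
    exact (CharP.cast_eq_zero_iff F 2 _).mpr (Nat.two_dvd_centralBinom_of_one_le hs)
  · rw [Finset.card_eq_zero.mpr (Finset.filter_eq_empty_iff.mpr fun W _ h => hAB (h.1.trans h.2)),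
      Nat.cast_zero]

end Omega

namespace FOmega

variable {F : Type*} [Field F] {n : ℕ}

noncomputable def single {a : ℤ} (Y : Omega (Fin n) a) : FOmega F n a := Finsupp.single Y 1

def coeff {b : ℤ} (Z : Omega (Fin n) b) : FOmega F n b →ₗ[F] F := Finsupp.lapply Z

theorem coeff_single {b : ℤ} (Y Z : Omega (Fin n) b) :
    coeff Z (single Y : FOmega F n b) = if Y = Z then 1 else 0 :=
  Finsupp.single_apply

theorem linearMap_ext {a b : ℤ} {f g : FOmega F n a →ₗ[F] FOmega F n b}
    (h : ∀ Y Z, coeff Z (f (single Y)) = coeff Z (g (single Y))) : f = g :=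
  Finsupp.lhom_ext' fun Y => LinearMap.ext_ring (Finsupp.ext (h Y))

theorem sum_coeff_smul_single {b : ℤ} (x : FOmega F n b) : ∑ X, coeff X x • single X = x := by
  refine (Finset.sum_congr rfl fun X _ => ?_).trans (Finsupp.univ_sum_single (M := F) x)
  exact Finsupp.smul_single_one _ _

theorem coeff_comp_single {a b c : ℤ} (f : FOmega F n a →ₗ[F] FOmega F n b)
    (g : FOmega F n b →ₗ[F] FOmega F n c) (Y : Omega (Fin n) a) (Z : Omega (Fin n) c) :
    coeff Z (g (f (single Y))) = ∑ X, coeff X (f (single Y)) * coeff Z (g (single X)) := by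
  conv_lhs => rw [← sum_coeff_smul_single (f (single Y))]
  simp only [map_sum, map_smul, smul_eq_mul]

theorem phi_single {a b : ℤ} (Y : Omega (Fin n) a) :
    phi F n a b (single Y) = ∑ X : Omega (Fin n) b with X.1 ⊆ Y.1, single X := by
  unfold phi single
  -- `FOmega` is a plain `def`, so the `Finsupp` lemmas only match up to defeq
  erw [Finsupp.lift_apply, Finsupp.sum_single_index (by simp), one_smul]
  refine Finset.sum_bij (fun X _ => ⟨X.1, (Finset.mem_filter.mp X.2).2⟩) ?_ ?_ ?_ (fun _ _ => rfl)
  · intro X _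
    simpa using (Finset.mem_filter.mp X.2).1
  · intro X _ X' _ h
    exact Subtype.ext (Subtype.mk.inj h)
  · intro X hX
    exact ⟨⟨X.1, by simpa using ⟨(Finset.mem_filter.mp hX).2, X.2⟩⟩, Finset.mem_attach _ _, rfl⟩

theorem phiStar_single {a b : ℤ} (Y : Omega (Fin n) a) :
    phiStar F n a b (single Y) = ∑ Z : Omega (Fin n) b with Y.1 ⊆ Z.1, single Z := by
  unfold phiStar single
  erw [Finsupp.lift_apply, Finsupp.sum_single_index (by simp), one_smul]

theorem coeff_phi_single {a b : ℤ} (Y : Omega (Fin n) a) (X : Omega (Fin n) b) :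
    coeff X (phi F n a b (single Y)) = if X.1 ⊆ Y.1 then 1 else 0 := by
  simp [phi_single, coeff_single]

theorem coeff_phiStar_single {a b : ℤ} (Y : Omega (Fin n) a) (Z : Omega (Fin n) b) :
    coeff Z (phiStar F n a b (single Y)) = if Y.1 ⊆ Z.1 then 1 else 0 := by
  simp [phiStar_single, coeff_single]

theorem coeff_phiStar_phi_single {a b : ℤ} (Y Z : Omega (Fin n) a) :
    coeff Z (phiStar F n b a (phi F n a b (single Y))) =
      (#{X : Omega (Fin n) b | X.1 ⊆ Y.1 ∧ X.1 ⊆ Z.1} : F) := by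
  simp only [coeff_comp_single, coeff_phi_single, coeff_phiStar_single,
    ite_zero_mul_ite_zero, mul_one, Finset.sum_boole]

theorem coeff_phi_phiStar_single {a b : ℤ} (Y Z : Omega (Fin n) a) :
    coeff Z (phi F n b a (phiStar F n a b (single Y))) =
      (#{W : Omega (Fin n) b | Y.1 ⊆ W.1 ∧ Z.1 ⊆ W.1} : F) := by
  simp only [coeff_comp_single, coeff_phi_single, coeff_phiStar_single,
    ite_zero_mul_ite_zero, mul_one, Finset.sum_boole]

theorem coeff_phi_phi_single {a b c : ℤ} (Y : Omega (Fin n) a) (X : Omega (Fin n) c) :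
    coeff X (phi F n b c (phi F n a b (single Y))) =
      (#{W : Omega (Fin n) b | W.1 ⊆ Y.1 ∧ X.1 ⊆ W.1} : F) := by
  simp only [coeff_comp_single, coeff_phi_single,
    ite_zero_mul_ite_zero, mul_one, Finset.sum_boole]

theorem coeff_phiStar_phiStar_single {a b c : ℤ} (Y : Omega (Fin n) a) (Z : Omega (Fin n) c) :
    coeff Z (phiStar F n b c (phiStar F n a b (single Y))) =
      (#{W : Omega (Fin n) b | Y.1 ⊆ W.1 ∧ W.1 ⊆ Z.1} : F) := by
  simp only [coeff_comp_single, coeff_phiStar_single,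
    ite_zero_mul_ite_zero, mul_one, Finset.sum_boole]

variable [CharP F 2]

theorem phi_comp_phi_eq_zero {a b c : ℤ} {s : ℕ} (hs : 0 < s) (hab : a = b + s)
    (hbc : b = c + s) : phi F n b c ∘ₗ phi F n a b = 0 := by
  refine linearMap_ext fun Y X => ?_
  rw [LinearMap.comp_apply, coeff_phi_phi_single, LinearMap.zero_apply, map_zero]
  simp_rw [and_comm (a := _ ⊆ Y.1)]
  exact Omega.natCast_card_between_eq_zero F hs (by rw [hbc, X.2]) (by rw [Y.2, hab])

theorem phiStar_comp_phiStar_eq_zero {a b c : ℤ} {s : ℕ} (hs : 0 < s) (hab : b = a + s)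
    (hbc : c = b + s) : phiStar F n b c ∘ₗ phiStar F n a b = 0 := by
  refine linearMap_ext fun Y Z => ?_
  rw [LinearMap.comp_apply, coeff_phiStar_phiStar_single, LinearMap.zero_apply, map_zero]
  exact Omega.natCast_card_between_eq_zero F hs (by rw [hab, Y.2]) (by rw [Z.2, hbc])

theorem phiStar_comp_phi_add_phi_comp_phiStar {τ : ℕ} {a : ℤ}
    (hmod : (n : ℤ) ≡ 2 * a + 2 ^ τ [ZMOD 2 ^ (τ + 1)]) :
    phiStar F n (a - 2 ^ τ) a ∘ₗ phi F n a (a - 2 ^ τ) +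
      phi F n (a + 2 ^ τ) a ∘ₗ phiStar F n a (a + 2 ^ τ) = LinearMap.id := by
  refine linearMap_ext fun Y Z => ?_
  rw [LinearMap.add_apply, map_add, LinearMap.comp_apply, LinearMap.comp_apply,
    coeff_phiStar_phi_single, coeff_phi_phiStar_single, LinearMap.id_apply, coeff_single,
    Omega.card_subset_and_subset, Omega.card_superset_and_superset]
  set c := #(Y.1 ∩ Z.1)
  have ht : (0 : ℤ) < 2 ^ τ := by positivity
  have hca : (c : ℤ) ≤ a := Y.2 ▸ Nat.cast_le.mpr (Finset.card_le_card Finset.inter_subset_left)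
  rcases lt_or_ge (c + 2 ^ τ - a) 0 with hneg | hnonneg
  · have := Omega.isEmpty_of_neg (α := Fin n) hneg
    have hYZ : Y ≠ Z := fun h => by have := Omega.eq_iff_card_inter.mp h; omega
    simp [hYZ]
  obtain ⟨r, hr⟩ := Int.eq_ofNat_of_zero_le hnonneg
  have hYZ : Y = Z ↔ r = 2 ^ τ := by
    rw [Omega.eq_iff_card_inter, ← Nat.cast_inj (R := ℤ)]
    push_cast
    omega
  have hrt : r ≤ 2 ^ τ := by
    rw [← Nat.cast_le (α := ℤ)]
    push_cast
    omega
  have hm : #(Y.1 ∪ Z.1)ᶜ ≡ c + 2 ^ τ [MOD 2 ^ (τ + 1)] := by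
    rw [← Int.natCast_modEq_iff, Finset.card_compl, Fintype.card_fin,
      Nat.cast_sub (by simpa using Finset.card_le_univ (Y.1 ∪ Z.1)), Omega.card_union]
    rw [Int.modEq_iff_dvd] at hmod ⊢
    push_cast
    convert hmod using 1
    ring
  rw [hr, Omega.card_subset, Omega.card_subset, if_congr hYZ rfl rfl]
  exact_mod_cast CharP.natCast_eq_natCast' F 2 (choose_add_choose_modEq_two hm hrt)

end FOmega

theorem splitExact_general (F : Type*) [Field F] [CharP F 2] (n k τ : ℕ)
    (hmod : n % 2 ^ (τ + 1) = (2 * k + 2 ^ τ) % 2 ^ (τ + 1)) :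
    IsCompl (LinearMap.ker (phi F n k ((k : ℤ) - 2 ^ τ)))
        (LinearMap.range (phiStar F n ((k : ℤ) - 2 ^ τ) k)) ∧
    LinearMap.ker (phi F n k ((k : ℤ) - 2 ^ τ)) =
      LinearMap.range (phi F n ((k : ℤ) + 2 ^ τ) k) := by
  have hmodk : (n : ℤ) ≡ 2 * (k : ℤ) + 2 ^ τ [ZMOD 2 ^ (τ + 1)] := by
    exact_mod_cast Int.natCast_modEq_iff.mpr hmod
  have hmodk' : (n : ℤ) ≡ 2 * ((k : ℤ) - 2 ^ τ) + 2 ^ τ [ZMOD 2 ^ (τ + 1)] :=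
    hmodk.trans (Int.modEq_iff_dvd.mpr ⟨-1, by ring⟩)
  have hI := FOmega.phiStar_comp_phi_add_phi_comp_phiStar (F := F) hmodk
  have hJ := FOmega.phiStar_comp_phi_add_phi_comp_phiStar (F := F) hmodk'
  rw [sub_add_cancel] at hJ
  have ht : 0 < 2 ^ τ := by positivity
  have hDD := FOmega.phi_comp_phi_eq_zero (F := F) (n := n) (a := k + 2 ^ τ) (b := k)
    (c := k - 2 ^ τ) ht (by push_cast; ring) (by push_cast; ring)
  have hUU := FOmega.phiStar_comp_phiStar_eq_zero (F := F) (n := n) (a := k - 2 ^ τ - 2 ^ τ)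
    (b := k - 2 ^ τ) (c := k) ht (by push_cast; ring) (by push_cast; ring)
  exact ⟨⟨LinearMap.disjoint_ker_range_of_comp_add_comp_eq_id hJ hUU,
      LinearMap.codisjoint_ker_range_of_comp_add_comp_eq_id hI hDD⟩,
    LinearMap.ker_eq_range_of_comp_add_comp_eq_id hI hDD⟩

/-- over a field of characteristic two, with `t = 2^τ`,
`n ≡ 2k + t mod 2^{τ+1}`, `t ≤ k` and `k + t ≤ n`, we have
`FΩ_k = ker φ_t^k ⊕ im φ_t^{k⋆}` and `ker φ_t^k = im φ_t^{k+t}`. -/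
theorem splitExact (F : Type*) [Field F] [CharP F 2] (n k τ : ℕ)
    (htk : 2 ^ τ ≤ k) (hkn : k + 2 ^ τ ≤ n)
    (hmod : n % 2 ^ (τ + 1) = (2 * k + 2 ^ τ) % 2 ^ (τ + 1)) :
    IsCompl (LinearMap.ker (phi F n k ((k : ℤ) - 2 ^ τ)))
        (LinearMap.range (phiStar F n ((k : ℤ) - 2 ^ τ) k)) ∧
    LinearMap.ker (phi F n k ((k : ℤ) - 2 ^ τ)) =
      LinearMap.range (phi F n ((k : ℤ) + 2 ^ τ) k) :=
  splitExact_general F n k τ hmod
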